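/- arXiv:2502.17582 — 5 statements merged into one kernel-verified Lean document; each statement's English description precedes it below -/
import Mathlib

section
/- For a fixed real λ₀ with 0 < λ₀ ≤ π/(2p), the function sending an integer l ∈ {1, …, p} to |sin(l·λ₀)/(l·sin(λ₀))| is strictly decreasing in l. -/
open Real

theorem stmt1 (p : ℕ) (hp : 0 < p) (lam0 : ℝ) (h0 : 0 < lam0)
    (h1 : lam0 ≤ π / (2 * p)) :
    ∀ l l' : ℕ, 1 ≤ l → l < l' → l' ≤ p →
      |Real.sin (l' * lam0) / (l' * Real.sin lam0)| <
        |Real.sin (l * lam0) / (l * Real.sin lam0)| := by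
  intro l l' hl hll' hl'p
  have hpR : (0:ℝ) < p := by exact_mod_cast hp
  have ha : (0:ℝ) < l := by exact_mod_cast hl
  have hab : (l:ℝ) < l' := by exact_mod_cast hll'
  have hb : (0:ℝ) < l' := lt_trans ha hab
  have hbp : (l':ℝ) ≤ p := by exact_mod_cast hl'p
  -- l' * lam0 ≤ π/2
  have hple : (l':ℝ) * lam0 ≤ π / 2 := by
    calc (l':ℝ) * lam0 ≤ p * lam0 := by nlinarith
    _ ≤ p * (π / (2 * p)) := by nlinarith
    _ = π / 2 := by field_simp
  have hll : (l:ℝ) * lam0 < l' * lam0 := by nlinarith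
  have hb0 : 0 < (l':ℝ) * lam0 := by positivity
  have ha0 : 0 < (l:ℝ) * lam0 := by positivity
  have hpi2 : π / 2 < π := by linarith [pi_pos]
  -- sines positive
  have hlam2 : lam0 ≤ π / 2 := by nlinarith [mul_le_mul_of_nonneg_right (show (1:ℝ) ≤ l' by exact_mod_cast hll'.le.trans' hl) h0.le]
  have hs : 0 < Real.sin lam0 := Real.sin_pos_of_pos_of_lt_pi h0 (by linarith)
  have hsa : 0 < Real.sin ((l:ℝ) * lam0) :=
    Real.sin_pos_of_pos_of_lt_pi ha0 (by linarith)
  have hsb : 0 < Real.sin ((l':ℝ) * lam0) :=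
    Real.sin_pos_of_pos_of_lt_pi hb0 (by linarith)
  -- key inequality via strict concavity
  have key : (l:ℝ) * Real.sin ((l':ℝ) * lam0) < l' * Real.sin ((l:ℝ) * lam0) := by
    have ht : (0:ℝ) < l / l' := by positivity
    have ht1 : (l:ℝ) / l' < 1 := (div_lt_one hb).mpr hab
    have h := strictConcaveOn_sin_Icc.2 (Set.mem_Icc.mpr ⟨le_rfl, Real.pi_pos.le⟩)
      (Set.mem_Icc.mpr ⟨hb0.le, by linarith⟩) (ne_of_lt hb0)
      (show (0:ℝ) < 1 - (l:ℝ)/l' by linarith) ht (by ring)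
    simp only [smul_eq_mul, mul_zero, Real.sin_zero, zero_add] at h
    have heq : (l:ℝ) / l' * ((l':ℝ) * lam0) = (l:ℝ) * lam0 := by
      field_simp
    rw [heq] at h
    have := mul_lt_mul_of_pos_left h hb
    calc (l:ℝ) * Real.sin ((l':ℝ) * lam0)
        = l' * ((l:ℝ) / l' * Real.sin ((l':ℝ) * lam0)) := by field_simp
      _ < l' * Real.sin ((l:ℝ) * lam0) := this
  rw [abs_of_pos (by positivity), abs_of_pos (by positivity)]
  rw [div_lt_div_iff₀ (by positivity) (by positivity)]
  nlinarith [mul_pos hs (sub_pos.mpr key)]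
end

section
/- Let l be an integer with 2 ≤ l ≤ p, let n ≥ 4 be an integer, let m = max(4p, lcm(2,n)), and let ζ be an n-th root of unity in ℂ with ζ ≠ 1 and ζ ≠ -1. Then |Im(ζ^l)/(l·Im(ζ))| ≤ cos(2π/m) < 1. -/
open Real

private lemma sin_mul_le_aux (l : ℕ) (hl : 2 ≤ l) (t : ℝ) (ht0 : 0 ≤ t)
    (hlt : (l : ℝ) * t ≤ π) :
    Real.sin ((l : ℝ) * t) ≤ (l : ℝ) * Real.sin t * Real.cos t := by
  have hl2 : (2 : ℝ) ≤ (l : ℝ) := by exact_mod_cast hl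
  have hl0 : (0 : ℝ) < l := by linarith
  have hmem : (l : ℝ) * t ∈ Set.Icc (0 : ℝ) π := ⟨by positivity, hlt⟩
  have h0 : (0 : ℝ) ∈ Set.Icc (0 : ℝ) π := ⟨le_refl _, Real.pi_pos.le⟩
  have ha : (0 : ℝ) ≤ 2 / l := by positivity
  have hb : (0 : ℝ) ≤ 1 - 2 / l := by
    have : 2 / (l : ℝ) ≤ 1 := by rw [div_le_one hl0]; linarith
    linarith
  have hab : 2 / (l : ℝ) + (1 - 2 / l) = 1 := by ring
  have hc := (strictConcaveOn_sin_Icc.concaveOn).2 hmem h0 ha hb hab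
  simp only [smul_eq_mul, Real.sin_zero, mul_zero, add_zero] at hc
  have harg : 2 / (l : ℝ) * ((l : ℝ) * t) = 2 * t := by field_simp
  rw [harg, Real.sin_two_mul] at hc
  -- hc : 2 / l * sin (l * t) ≤ 2 * sin t * cos t
  have h2 := mul_le_mul_of_nonneg_left hc (by positivity : (0 : ℝ) ≤ (l : ℝ) / 2)
  calc Real.sin ((l : ℝ) * t) = (l : ℝ) / 2 * (2 / l * Real.sin ((l : ℝ) * t)) := by
        field_simp
    _ ≤ (l : ℝ) / 2 * (2 * Real.sin t * Real.cos t) := h2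
    _ = (l : ℝ) * Real.sin t * Real.cos t := by ring

private lemma key_ineq (l : ℕ) (hl : 2 ≤ l) (t : ℝ) (ht0 : 0 < t) (ht : t ≤ π / 2)
    (y : ℝ) (hy0 : 0 ≤ y) (hy4 : y ≤ π / 4) (hyt : y ≤ t) :
    |Real.sin ((l : ℝ) * t)| ≤ (l : ℝ) * Real.sin t * Real.cos y := by
  have hl2 : (2 : ℝ) ≤ (l : ℝ) := by exact_mod_cast hl
  have hπ := Real.pi_pos
  have hst : 0 < Real.sin t := Real.sin_pos_of_pos_of_lt_pi ht0 (by linarith)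
  rcases le_or_gt ((l : ℝ) * t) π with hcase | hcase
  · have hs0 : 0 ≤ Real.sin ((l : ℝ) * t) :=
      Real.sin_nonneg_of_nonneg_of_le_pi (by positivity) hcase
    rw [abs_of_nonneg hs0]
    have h1 := sin_mul_le_aux l hl t ht0.le hcase
    have h2 : Real.cos t ≤ Real.cos y :=
      Real.cos_le_cos_of_nonneg_of_le_pi hy0 (by linarith) hyt
    have h3 := mul_le_mul_of_nonneg_left h2 (show (0:ℝ) ≤ (l : ℝ) * Real.sin t by positivity)
    calc Real.sin ((l : ℝ) * t) ≤ (l : ℝ) * Real.sin t * Real.cos t := h1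
      _ = (l : ℝ) * Real.sin t * Real.cos t := by ring
      _ ≤ (l : ℝ) * Real.sin t * Real.cos y := by
          calc (l : ℝ) * Real.sin t * Real.cos t = ((l : ℝ) * Real.sin t) * Real.cos t := by ring
            _ ≤ ((l : ℝ) * Real.sin t) * Real.cos y := h3
            _ = (l : ℝ) * Real.sin t * Real.cos y := by ring
  · have h1 : |Real.sin ((l : ℝ) * t)| ≤ 1 := Real.abs_sin_le_one _
    have hj : 2 / π * t ≤ Real.sin t := Real.mul_le_sin ht0.le ht
    have hc : (1 : ℝ) / 2 ≤ Real.cos y := by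
      have h3 : Real.cos y ≥ Real.cos (π / 3) :=
        Real.cos_le_cos_of_nonneg_of_le_pi hy0 (by linarith) (by linarith)
      rw [Real.cos_pi_div_three] at h3
      linarith
    -- l * sin t ≥ l * (2/π) * t = (2/π)*(l*t) > 2
    have h4 : (2 : ℝ) ≤ (l : ℝ) * Real.sin t := by
      have h5 : (l : ℝ) * (2 / π * t) ≤ (l : ℝ) * Real.sin t :=
        mul_le_mul_of_nonneg_left hj (by linarith)
      have h6 : (2 : ℝ) < (l : ℝ) * (2 / π * t) := by
        have hh := mul_lt_mul_of_pos_left hcase (show (0:ℝ) < 2/π by positivity)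
        have he : 2 / π * π = 2 := by field_simp
        nlinarith
      linarith
    nlinarith

private lemma abs_sin_abs (d : ℝ) (hd : |d| ≤ π) : |Real.sin d| = Real.sin |d| := by
  rcases abs_cases d with ⟨he, h0⟩ | ⟨he, h0⟩
  · rw [he]
    exact abs_of_nonneg (Real.sin_nonneg_of_nonneg_of_le_pi h0 (he ▸ hd))
  · rw [he, Real.sin_neg]
    have h1 : Real.sin d ≤ 0 := by
      apply Real.sin_nonpos_of_nonpos_of_neg_pi_le h0.le
      have : -d ≤ π := he ▸ hd
      linarith
    rw [abs_of_nonpos h1]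

private lemma abs_neg_one_zpow_aux (j : ℤ) : |((-1 : ℝ)) ^ j| = 1 := by
  rcases Int.even_or_odd j with he | ho
  · rw [he.neg_one_zpow, abs_one]
  · rw [ho.neg_one_zpow, abs_neg, abs_one]

set_option maxHeartbeats 1000000 in
theorem stmt2 (p l n : ℕ) (hl : 2 ≤ l) (hlp : l ≤ p) (hn : 4 ≤ n)
    (m : ℕ) (hm : m = max (4 * p) (Nat.lcm 2 n))
    (ζ : ℂ) (hζn : ζ ^ n = 1) (hζ1 : ζ ≠ 1) (hζm1 : ζ ≠ -1) :
    |(ζ ^ l).im / (l * ζ.im)| ≤ Real.cos (2 * π / m) ∧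
      Real.cos (2 * π / m) < 1 := by
  have hπ := Real.pi_pos
  have hn0 : n ≠ 0 := by omega
  have hnR : (0 : ℝ) < n := by positivity
  -- m facts
  have hm8 : 8 ≤ m := by
    have : 8 ≤ 4 * p := by omega
    omega
  have hmL : Nat.lcm 2 n ≤ m := by omega
  have hml : 4 * l ≤ m := by omega
  have hm0 : (0 : ℝ) < m := by
    have : 0 < m := by omega
    exact_mod_cast this
  haveI : NeZero n := ⟨hn0⟩
  -- write ζ = exp(θ i)
  obtain ⟨k, hk, hζ⟩ := (Complex.isPrimitiveRoot_exp n hn0).eq_pow_of_pow_eq_one hζn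
  set θ : ℝ := 2 * π * k / n with hθdef
  have hζθ : ζ = Complex.exp ((θ : ℝ) * Complex.I) := by
    rw [← hζ, ← Complex.exp_nat_mul]
    congr 1
    push_cast [hθdef]
    have : (n : ℂ) ≠ 0 := by exact_mod_cast hn0
    field_simp
  have him : ζ.im = Real.sin θ := by rw [hζθ, Complex.exp_ofReal_mul_I_im]
  have hre : ζ.re = Real.cos θ := by rw [hζθ, Complex.exp_ofReal_mul_I_re]
  have hliml : (ζ ^ l).im = Real.sin (l * θ) := by
    rw [hζθ, ← Complex.exp_nat_mul]
    rw [show (l : ℂ) * ((θ : ℝ) * Complex.I) = ((l * θ : ℝ) : ℂ) * Complex.I by push_cast; ring]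
    exact Complex.exp_ofReal_mul_I_im _
  -- sin θ ≠ 0
  have hsθ : Real.sin θ ≠ 0 := by
    intro h0
    have hc2 : Real.cos θ = 1 ∨ Real.cos θ = -1 := by
      have hpy := Real.sin_sq_add_cos_sq θ
      have hz : (Real.cos θ - 1) * (Real.cos θ + 1) = 0 := by nlinarith
      rcases mul_eq_zero.mp hz with h | h
      · left; linarith
      · right; linarith
    rcases hc2 with h | h
    · exact hζ1 (by apply Complex.ext <;> simp [hre, him, h0, h])
    · exact hζm1 (by apply Complex.ext <;> simp [hre, him, h0, h])
  -- reduce to distance to πℤ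
  set j : ℤ := round (θ / π) with hjdef
  set d : ℝ := θ - j * π with hddef
  set t : ℝ := |d| with htdef
  have hd2 : t ≤ π / 2 := by
    have h1 := abs_sub_round (θ / π)
    have h2 : d = π * (θ / π - j) := by rw [hddef]; field_simp
    have h3 : |d| = π * |θ / π - j| := by
      rw [h2, abs_mul, abs_of_pos hπ]
    rw [htdef, h3]
    nlinarith
  have hsin_eq : |Real.sin θ| = Real.sin t := by
    have h1 : Real.sin θ = (-1 : ℝ) ^ j * Real.sin d := by
      have := Real.sin_add_int_mul_pi d j
      rw [show d + j * π = θ by rw [hddef]; ring] at this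
      rw [this]
    rw [h1, abs_mul, abs_neg_one_zpow_aux, one_mul, htdef]
    exact abs_sin_abs d (by rw [← htdef]; linarith)
  have hsinl_eq : |Real.sin ((l : ℝ) * θ)| = |Real.sin ((l : ℝ) * t)| := by
    have h1 : Real.sin ((l : ℝ) * θ) = (-1 : ℝ) ^ ((l : ℤ) * j) * Real.sin ((l : ℝ) * d) := by
      have := Real.sin_add_int_mul_pi ((l : ℝ) * d) ((l : ℤ) * j)
      rw [show (l : ℝ) * d + ((l : ℤ) * j : ℤ) * π = (l : ℝ) * θ by rw [hddef]; push_cast; ring]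
        at this
      rw [this]
    rw [h1, abs_mul, abs_neg_one_zpow_aux, one_mul]
    rcases abs_cases d with ⟨he, _⟩ | ⟨he, _⟩
    · rw [htdef, he]
    · rw [htdef, he, show (l : ℝ) * -d = -((l : ℝ) * d) by ring, Real.sin_neg, abs_neg]
  have ht0 : 0 < t := by
    rcases lt_or_eq_of_le (abs_nonneg d) with h | h
    · exact h
    · exfalso
      apply hsθ
      have hd0 : d = 0 := abs_eq_zero.mp h.symm
      have : θ = j * π := by rw [hddef] at hd0; linarith
      rw [this]
      exact Real.sin_int_mul_pi j
  -- lower bound on t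
  have htm : 2 * π / m ≤ t := by
    set a : ℤ := 2 * k - j * n with hadef
    have hta : t = π * |(a : ℝ)| / n := by
      have h2 : d = π * (a : ℝ) / n := by
        rw [hddef, hθdef, hadef]; push_cast; field_simp
      rw [htdef, h2, abs_div, abs_mul, abs_of_pos hπ, abs_of_pos hnR]
    have ha0 : a ≠ 0 := by
      intro h
      rw [h] at hta
      simp at hta
      rw [hta] at ht0
      exact lt_irrefl _ ht0
    -- |a| * m ≥ 2 * n
    have hkey : 2 * n ≤ |a| * m := by
      rcases Nat.even_or_odd n with ⟨n', hn'⟩ | hodd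
      · -- n even : a is even, |a| ≥ 2, m ≥ lcm 2 n = n
        have haeven : (2 : ℤ) ∣ a := by
          rw [hadef, hn']; push_cast; exact ⟨k - j * n', by ring⟩
        have ha2 : 2 ≤ |a| := by
          rcases haeven with ⟨c, hc⟩
          have hc0 : c ≠ 0 := by rintro rfl; simp at hc; exact ha0 hc
          have hcp : 0 < |c| := abs_pos.mpr hc0
          rw [hc, abs_mul]
          have : |(2 : ℤ)| = 2 := by norm_num
          rw [this]
          linarith
        have hLn : Nat.lcm 2 n = n := Nat.dvd_antisymm
          (Nat.lcm_dvd ⟨n', by omega⟩ dvd_rfl) (Nat.dvd_lcm_right 2 n)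
        have : (n : ℤ) ≤ m := by
          have h7 : n ≤ m := hLn ▸ hmL
          exact_mod_cast h7
        nlinarith [abs_nonneg a]
      · -- n odd : lcm 2 n = 2n ≤ m
        have hcop : Nat.Coprime 2 n := hodd.coprime_two_left
        have hLn : Nat.lcm 2 n = 2 * n := hcop.lcm_eq_mul
        have h2n : 2 * n ≤ m := hLn ▸ hmL
        have h2nZ : (2 * n : ℤ) ≤ m := by exact_mod_cast h2n
        have ha1 : 0 < |a| := abs_pos.mpr ha0
        have hmZ : (0 : ℤ) ≤ m := by positivity
        nlinarith
    have hkeyR : 2 * (n : ℝ) ≤ |(a : ℝ)| * m := by exact_mod_cast hkey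
    rw [hta, div_le_div_iff₀ hm0 hnR]
    nlinarith
  -- apply the key inequality
  set y : ℝ := 2 * π / m with hydef
  have hy0 : 0 ≤ y := by positivity
  have hy4 : y ≤ π / 4 := by
    rw [hydef, div_le_div_iff₀ hm0 (by norm_num : (0:ℝ) < 4)]
    have : (8 : ℝ) ≤ m := by exact_mod_cast hm8
    nlinarith
  have hmain := key_ineq l hl t ht0 hd2 y hy0 hy4 htm
  rw [← hsinl_eq] at hmain
  have hcy1 : Real.cos y < 1 := by
    have := Real.cos_lt_cos_of_nonneg_of_le_pi (le_refl (0:ℝ)) (by linarith) (by positivity : 0 < y)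
    rw [Real.cos_zero] at this
    linarith
  constructor
  · rw [hliml, him]
    have hlR : (0 : ℝ) < l := by
      have : 0 < l := by omega
      exact_mod_cast this
    have hsabs : 0 < |Real.sin θ| := abs_pos.mpr hsθ
    rw [abs_div, abs_mul, Nat.abs_cast]
    rw [div_le_iff₀ (by positivity)]
    calc |Real.sin ((l:ℝ) * θ)| ≤ (l : ℝ) * Real.sin t * Real.cos y := hmain
      _ = Real.cos y * ((l : ℝ) * Real.sin t) := by ring
      _ = Real.cos y * ((l : ℝ) * |Real.sin θ|) := by rw [hsin_eq]
  · exact hcy1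
end

section
/- Let m_1, m_2, m_3, m_4 be nonnegative integers with m_1 + m_3 even, and set D = 2^{m_1}·3^{m_2}·4^{m_3}·5^{m_4}. Then (1/24)·((D − 4·(−1)^{m_4+m_3}·0^{m_2})·(1+(−1)^{m_1+m_3}) + 6·(−1)^{m_2}·0^{m_1+m_3}) = ⌊(D+7)/12⌋, where 0^n = 1 if n = 0 and 0 otherwise. -/
/-!
With `D = 2^m₁ 3^m₂ 4^m₃ 5^m₄`, the left-hand side is `(D - r) / 12` for
`r = 4 (-1)^(m₄+m₃) 0^m₂ - 3 (-1)^m₂ 0^(m₁+m₃)`. Reducing mod 3 and mod 4 (using that `m₁ + m₃` is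
even) shows `D ≡ r (mod 12)`, and since `-7 ≤ r ≤ 4`, i.e. `0 ≤ r + 7 < 12`, the number
`(D - r) / 12` is exactly `⌊(D + 7) / 12⌋`.
-/

theorem Int.mul_floor_div_eq_sub_of_modEq {K : Type*} [Field K] [LinearOrder K]
    [IsStrictOrderedRing K] [FloorRing K] {a c n r : ℤ} (hn : 0 < n) (ha : a ≡ r [ZMOD n])
    (h₀ : 0 ≤ r + c) (h₁ : r + c < n) :
    n * ⌊((a : K) + c) / n⌋ = a - r := by
  obtain ⟨q, hq⟩ := ha.symm.dvd
  have hnK : (0 : K) < n := by exact_mod_cast hn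
  suffices ⌊((a : K) + c) / n⌋ = q by rw [this, hq]
  rw [Int.floor_eq_iff, le_div_iff₀ hnK, div_lt_iff₀ hnK]
  have ha' : (a : K) = r + n * q := by rw [← Int.cast_mul, ← hq]; push_cast; ring
  have h₀' : (0 : K) ≤ r + c := by exact_mod_cast h₀
  have h₁' : (r : K) + c < n := by exact_mod_cast h₁
  constructor <;> nlinarith

def residueMod12 (m₁ m₂ m₃ m₄ : ℕ) : ℤ :=
  4 * (-1) ^ (m₄ + m₃) * 0 ^ m₂ - 3 * (-1) ^ m₂ * 0 ^ (m₁ + m₃)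

lemma residueMod12_bounds (m₁ m₂ m₃ m₄ : ℕ) :
    -7 ≤ residueMod12 m₁ m₂ m₃ m₄ ∧ residueMod12 m₁ m₂ m₃ m₄ ≤ 4 := by
  unfold residueMod12
  rcases neg_one_pow_eq_or ℤ (m₄ + m₃) with h | h <;>
  rcases neg_one_pow_eq_or ℤ m₂ with h' | h' <;>
  rcases m₂ with _ | m₂ <;>
  simp_all [zero_pow_eq] <;> split_ifs <;> omega

lemma modEq_residueMod12 {m₁ m₃ : ℕ} (m₂ m₄ : ℕ) (h : Even (m₁ + m₃)) :
    2 ^ m₁ * 3 ^ m₂ * 4 ^ m₃ * 5 ^ m₄ ≡ residueMod12 m₁ m₂ m₃ m₄ [ZMOD 12] := by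
  rw [show (12 : ℤ) = 3 * 4 from rfl, ← Int.modEq_and_modEq_iff_modEq_mul (by decide)]
  unfold residueMod12
  refine ⟨(ZMod.intCast_eq_intCast_iff _ _ 3).mp ?_, (ZMod.intCast_eq_intCast_iff _ _ 4).mp ?_⟩
  · have hsign : (-1 : ZMod 3) ^ m₁ = (-1) ^ m₃ := neg_one_pow_congr (Nat.even_add.mp h)
    push_cast
    rw [show (2 : ZMod 3) = -1 from rfl, show (3 : ZMod 3) = 0 from rfl,
      show (4 : ZMod 3) = 1 from rfl, show (5 : ZMod 3) = -1 from rfl, hsign]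
    ring
  · have h24 : (2 : ZMod 4) ^ m₁ * 4 ^ m₃ = 0 ^ (m₁ + m₃) := by
      rcases Nat.eq_zero_or_pos (m₁ + m₃) with h0 | h0
      · simp [show m₁ = 0 by omega, show m₃ = 0 by omega]
      · have htwo : 2 ≤ m₁ + 2 * m₃ := by obtain ⟨k, hk⟩ := h; omega
        rw [zero_pow h0.ne', show (4 : ZMod 4) = 2 ^ 2 from rfl, ← pow_mul, ← pow_add,
          ← Nat.sub_add_cancel htwo, pow_add, show (2 : ZMod 4) ^ 2 = 0 from rfl, mul_zero]
    push_cast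
    rw [show (3 : ZMod 4) = -1 from rfl, show (5 : ZMod 4) = 1 from rfl,
      show (4 : ZMod 4) = 0 from rfl] at *
    linear_combination (-1) ^ m₂ * h24

theorem stmt8 (m1 m2 m3 m4 : ℕ) (h : Even (m1 + m3)) :
    (1 / 24 : ℚ) *
        (((2 ^ m1 * 3 ^ m2 * 4 ^ m3 * 5 ^ m4 : ℚ) -
            4 * (-1 : ℚ) ^ (m4 + m3) * (if m2 = 0 then 1 else 0)) *
          (1 + (-1 : ℚ) ^ (m1 + m3)) +
          6 * (-1 : ℚ) ^ m2 * (if m1 + m3 = 0 then 1 else 0)) =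
      (⌊((2 ^ m1 * 3 ^ m2 * 4 ^ m3 * 5 ^ m4 : ℚ) + 7) / 12⌋ : ℤ) := by
  obtain ⟨hlo, hhi⟩ := residueMod12_bounds m1 m2 m3 m4
  have hfloor := congrArg (Int.cast : ℤ → ℚ) <|
    Int.mul_floor_div_eq_sub_of_modEq (K := ℚ) (c := 7) (by norm_num)
      (modEq_residueMod12 m2 m4 h) (by omega) (by omega)
  push_cast [residueMod12] at hfloor
  rw [h.neg_one_pow, ← zero_pow_eq, ← zero_pow_eq]
  linear_combination (-1 / 12 : ℚ) * hfloor
end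

section
/- In SL₂(𝔽_q) with q odd, the number of p-regular conjugacy classes (classes of elements of order prime to p, where q = p^e) is exactly q: they are represented by ±I together with the companion matrices of the polynomials T² − bT + 1 for b ∈ 𝔽_q \ {2, −2}. -/
open Matrix

def companionSL (F : Type*) [Field F] (b : F) :
    Matrix.SpecialLinearGroup (Fin 2) F :=
  ⟨!![0, -1; 1, b], by simp [Matrix.det_fin_two_of]⟩

/-!
An element `g ∈ SL₂(𝔽_q)` is classified by its trace `t`.

If `t ≠ ±2`, the characteristic polynomial `X² - tX + 1` is separable, so it divides
`X ^ q ^ k - X` for some `k ≥ 1`; hence `g ^ q ^ k = g` and the order of `g` divides `q ^ k - 1`,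
which is prime to `p`. Such a `g` is conjugate in `SL₂` (not merely in `GL₂`) to the companion
matrix of its characteristic polynomial: the base change to `(v, g v)` has determinant `1` as soon
as `v` solves a nondegenerate binary quadratic equation `Q(v) = 1`, which is always solvable over
a finite field of odd characteristic.

If `t = 2`, then `(g - 1)² = 0`, so `g ^ p = 1` and a `p`-regular such `g` is `1`; the case
`t = -2` reduces to this one through `-g`, since `p` is odd.

So the trace is a bijection from the `p`-regular classes onto `𝔽_q`.
-/

open Polynomial

theorem Polynomial.Separable.exists_dvd_X_pow_card_pow_sub_X {F : Type*} [Field F] [Fintype F]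
    {f : F[X]} (hf : f.Separable) : ∃ n ≠ 0, f ∣ X ^ Fintype.card F ^ n - X := by
  let K := f.SplittingField
  have : Fintype K := Fintype.ofFinite K
  refine ⟨Module.finrank F K, Module.finrank_pos.ne', ?_⟩
  rw [← map_dvd_map' (algebraMap F K), ← Module.card_eq_pow_finrank]
  simp only [Polynomial.map_sub, Polynomial.map_pow, map_X]
  refine (SplittingField.splits f).dvd_of_roots_le_roots (map_ne_zero hf.ne_zero) ?_
  rw [FiniteField.roots_X_pow_card_sub_X, Multiset.le_iff_subset (nodup_roots hf.map)]
  exact fun x _ ↦ Finset.mem_univ_val x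

theorem Matrix.exists_pow_card_pow_eq_self_of_separable_charpoly {n F : Type*} [Fintype n]
    [DecidableEq n] [Field F] [Fintype F] {A : Matrix n n F} (hA : A.charpoly.Separable) :
    ∃ k ≠ 0, A ^ Fintype.card F ^ k = A := by
  obtain ⟨k, hk, f, hf⟩ := hA.exists_dvd_X_pow_card_pow_sub_X
  refine ⟨k, hk, ?_⟩
  have := congrArg (aeval A) hf
  rwa [map_mul, aeval_self_charpoly, zero_mul, map_sub, map_pow, aeval_X, sub_eq_zero] at this

theorem Matrix.SpecialLinearGroup.coprime_orderOf_of_separable_charpoly {n F : Type*}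
    [Fintype n] [DecidableEq n] [Field F] [Fintype F] {p : ℕ} [CharP F p]
    {g : SpecialLinearGroup n F} (hg : (g : Matrix n n F).charpoly.Separable) :
    (orderOf g).Coprime p := by
  obtain ⟨k, hk, h⟩ := exists_pow_card_pow_eq_self_of_separable_charpoly hg
  set Q := Fintype.card F ^ k
  have hQ : 1 ≤ Q := Nat.one_le_pow _ _ Fintype.card_pos
  have hgQ : g ^ (Q - 1) = 1 := by
    rw [← mul_left_inj g, ← pow_succ, Nat.sub_add_cancel hQ, one_mul]
    exact Subtype.ext h
  have hpQ : p ∣ Q :=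
    ((CharP.cast_eq_zero_iff F p _).mp (Nat.cast_card_eq_zero F)).trans (dvd_pow_self _ hk)
  have hQp : (Q - 1).Coprime p :=
    ((Nat.coprime_self_sub_left hQ).mpr (Nat.coprime_one_left Q)).coprime_dvd_right hpQ
  exact hQp.coprime_dvd_left (orderOf_dvd_of_pow_eq_one hgQ)

theorem Matrix.separable_charpoly_fin_two {F : Type*} [Field F] {M : Matrix (Fin 2) (Fin 2) F}
    (hM : M.discr ≠ 0) : M.charpoly.Separable := by
  rw [discr_fin_two] at hM
  set d := M.trace ^ 2 - 4 * M.det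
  set u := C d⁻¹
  have hu : u * C d = 1 := by rw [← C_mul, inv_mul_cancel₀ hM, C_1]
  have hCd : C d = C M.trace ^ 2 - 4 * C M.det := by simp [d, map_ofNat]
  rw [charpoly_fin_two, Separable]
  -- Bézout relation from `(2X - t)² - 4 (X² - tX + det) = t² - 4 det`
  refine ⟨-4 * u, u * (2 * X - C M.trace), ?_⟩
  simp only [derivative_add, derivative_sub, derivative_X_pow, derivative_C_mul_X, derivative_C,
    Nat.cast_ofNat, map_ofNat]
  linear_combination hu - u * hCd

theorem Matrix.sq_eq_trace_smul_sub_det_smul_fin_two {R : Type*} [CommRing R] [Nontrivial R]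
    (M : Matrix (Fin 2) (Fin 2) R) : M ^ 2 = M.trace • M - M.det • 1 := by
  have h := aeval_self_charpoly M
  rw [charpoly_fin_two] at h
  simp only [map_add, map_sub, map_pow, aeval_X, aeval_C, Algebra.algebraMap_eq_smul_one,
    map_mul] at h
  rw [← sub_eq_zero, ← h, smul_mul_assoc, one_mul]
  abel

theorem Matrix.SpecialLinearGroup.eq_one_of_trace_eq_two {F : Type*} [Field F] {p : ℕ}
    [Fact p.Prime] [CharP F p] {g : SpecialLinearGroup (Fin 2) F}
    (ht : (g : Matrix (Fin 2) (Fin 2) F).trace = 2) (hg : (orderOf g).Coprime p) : g = 1 := by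
  set N := (g : Matrix (Fin 2) (Fin 2) F) - 1
  have hN : N ^ 2 = 0 := by
    have h := sq_eq_trace_smul_sub_det_smul_fin_two (g : Matrix (Fin 2) (Fin 2) F)
    rw [ht, g.prop, one_smul, two_smul] at h
    rw [sq, sub_mul, mul_sub, mul_sub, ← sq, h, mul_one, one_mul, mul_one]
    abel
  have hgp : g ^ p = 1 := by
    apply Subtype.ext
    have : (g : Matrix (Fin 2) (Fin 2) F) = N + 1 := by simp [N]
    rw [SpecialLinearGroup.coe_pow, this, add_pow_char_of_commute (p := p) (Commute.one_right N),
      one_pow, pow_eq_zero_of_le (Fact.out : p.Prime).two_le hN, zero_add]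
    rfl
  exact orderOf_eq_one_iff.mp (hg.eq_one_of_dvd (orderOf_dvd_of_pow_eq_one hgp))

theorem orderOf_neg_dvd {M : Type*} [Monoid M] [HasDistribNeg M] (x : M) :
    orderOf (-x) ∣ 2 * orderOf x :=
  orderOf_dvd_of_pow_eq_one <| by
    rw [pow_mul, neg_sq, ← pow_mul, mul_comm, pow_mul, pow_orderOf_eq_one, one_pow]

theorem Nat.Coprime.orderOf_neg {M : Type*} [Monoid M] [HasDistribNeg M] {p : ℕ} (hp : Odd p)
    {x : M} (hx : (orderOf x).Coprime p) : (orderOf (-x)).Coprime p :=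
  ((Nat.coprime_two_left.mpr hp).mul_left hx).coprime_dvd_left (orderOf_neg_dvd x)

theorem ringChar_ne_two_of_odd {R : Type*} [Ring R] {p : ℕ} [CharP R p] (hp : Odd p) :
    ringChar R ≠ 2 := by
  rw [ringChar.eq R p]
  rintro rfl
  exact Nat.not_odd_iff_even.mpr even_two hp

theorem FiniteField.exists_quadratic_eq_one {F : Type*} [Field F] [Fintype F]
    (hF : ringChar F ≠ 2) {a b c : F} (hd : b ^ 2 - 4 * a * c ≠ 0) :
    ∃ x y, a * x ^ 2 + b * x * y + c * y ^ 2 = 1 := by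
  have h2 : (2 : F) ≠ 0 := Ring.two_ne_zero hF
  have h4 : (4 : F) ≠ 0 := by simpa [← two_add_two_eq_four, ← two_mul] using h2
  rcases eq_or_ne a 0 with rfl | ha
  · have hb : b ≠ 0 := by rintro rfl; simp at hd
    exact ⟨(1 - c) / b, 1, by field_simp; ring⟩
  · set e := -(b ^ 2 - 4 * a * c) / (4 * a)
    have he : e ≠ 0 := div_ne_zero (neg_ne_zero.mpr hd) (mul_ne_zero h4 ha)
    obtain ⟨u, v, huv⟩ := exists_root_sum_quadratic
      (f := C a * X ^ 2 + C 0 * X + C (-1)) (g := C e * X ^ 2 + C 0 * X + C 0)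
      (degree_quadratic ha) (degree_quadratic he) (odd_card_of_char_ne_two hF)
    simp only [eval_add, eval_mul, eval_pow, eval_C, eval_X, zero_mul, add_zero] at huv
    have hsquare : a * (u - b / (2 * a) * v) ^ 2 + b * (u - b / (2 * a) * v) * v + c * v ^ 2 =
        a * u ^ 2 + e * v ^ 2 := by
      simp only [e]
      field_simp
      ring
    exact ⟨u - b / (2 * a) * v, v, by linear_combination hsquare + huv⟩

theorem Matrix.SpecialLinearGroup.trace_eq_of_isConj {n F : Type*} [Fintype n] [DecidableEq n]
    [CommRing F] {g h : SpecialLinearGroup n F} (hgh : IsConj g h) :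
    (g : Matrix n n F).trace = (h : Matrix n n F).trace := by
  obtain ⟨c, rfl⟩ := isConj_iff.mp hgh
  rw [coe_mul, coe_mul, trace_mul_cycle, ← coe_mul, inv_mul_cancel, coe_one, one_mul]

theorem Matrix.SpecialLinearGroup.discr_ne_zero_of_trace_ne {F : Type*} [Field F]
    {g : SpecialLinearGroup (Fin 2) F} (h2 : (g : Matrix (Fin 2) (Fin 2) F).trace ≠ 2)
    (h2' : (g : Matrix (Fin 2) (Fin 2) F).trace ≠ -2) :
    (g : Matrix (Fin 2) (Fin 2) F).discr ≠ 0 := by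
  set t := (g : Matrix (Fin 2) (Fin 2) F).trace
  rw [discr_fin_two, g.prop, show t ^ 2 - 4 * 1 = (t - 2) * (t - -2) by ring]
  exact mul_ne_zero (sub_ne_zero.mpr h2) (sub_ne_zero.mpr h2')

@[simp]
theorem trace_companionSL {F : Type*} [Field F] (b : F) :
    (companionSL F b : Matrix (Fin 2) (Fin 2) F).trace = b := by
  simp [companionSL, trace_fin_two]

theorem isConj_companionSL_trace {F : Type*} [Field F] [Fintype F] (hF : ringChar F ≠ 2)
    (g : SpecialLinearGroup (Fin 2) F) (hg : (g : Matrix (Fin 2) (Fin 2) F).discr ≠ 0) :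
    IsConj (companionSL F (g : Matrix (Fin 2) (Fin 2) F).trace) g := by
  obtain ⟨a, b, c, d, hgM⟩ : ∃ a b c d, (g : Matrix (Fin 2) (Fin 2) F) = !![a, b; c, d] :=
    ⟨_, _, _, _, eta_fin_two _⟩
  have hdet : a * d - b * c = 1 := by rw [← det_fin_two_of, ← hgM, g.prop]
  rw [discr_fin_two, hgM, det_fin_two_of, trace_fin_two_of] at hg
  -- conjugate by the matrix with columns `v = (x, y)` and `g v`: its determinant is a binary
  -- quadratic form in `v` whose discriminant is that of `g`
  obtain ⟨x, y, hxy⟩ := FiniteField.exists_quadratic_eq_one hF (a := c) (b := d - a) (c := -b)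
    (by convert hg using 1; ring)
  let P : SpecialLinearGroup (Fin 2) F :=
    ⟨!![x, a * x + b * y; y, c * x + d * y], by rw [det_fin_two_of]; linear_combination hxy⟩
  refine isConj_iff.mpr ⟨P, ?_⟩
  rw [mul_inv_eq_iff_eq_mul]
  refine Subtype.ext ?_
  change !![x, a * x + b * y; y, c * x + d * y] * !![0, -1; 1, (g : Matrix (Fin 2) (Fin 2) F).trace]
    = (g : Matrix (Fin 2) (Fin 2) F) * !![x, a * x + b * y; y, c * x + d * y]
  rw [hgM, trace_fin_two_of, mul_fin_two, mul_fin_two]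
  ext i j
  fin_cases i <;> fin_cases j <;> simp
  · linear_combination x * hdet
  · linear_combination y * hdet

open Classical in
noncomputable def repOfTrace {F : Type*} [Field F] (b : F) : SpecialLinearGroup (Fin 2) F :=
  if b = 2 then 1 else if b = -2 then -1 else companionSL F b

section repOfTrace

variable {F : Type*} [Field F]

@[simp]
theorem trace_repOfTrace (b : F) : (repOfTrace b : Matrix (Fin 2) (Fin 2) F).trace = b := by
  unfold repOfTrace
  split_ifs with h h' <;> simp [*]

theorem injective_mk_repOfTrace :
    Function.Injective fun b : F ↦ ConjClasses.mk (repOfTrace b) := fun b b' h ↦ by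
  simpa using SpecialLinearGroup.trace_eq_of_isConj (ConjClasses.mk_eq_mk_iff_isConj.mp h)

theorem range_mk_repOfTrace (hF : ringChar F ≠ 2) :
    Set.range (fun b : F ↦ ConjClasses.mk (repOfTrace b)) =
      insert (ConjClasses.mk 1) (insert (ConjClasses.mk (-1))
        ((fun b ↦ ConjClasses.mk (companionSL F b)) '' {b : F | b ≠ 2 ∧ b ≠ -2})) := by
  have h22 : (-2 : F) ≠ 2 :=
    fun h ↦ Ring.two_ne_zero hF ((Ring.eq_self_iff_eq_zero_of_char_ne_two hF).mp h)
  ext c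
  simp only [Set.mem_range, Set.mem_insert_iff, Set.mem_image, Set.mem_ofPred_eq]
  constructor
  · rintro ⟨b, rfl⟩
    unfold repOfTrace
    split_ifs with h h'
    exacts [Or.inl rfl, Or.inr (Or.inl rfl), Or.inr (Or.inr ⟨b, ⟨h, h'⟩, rfl⟩)]
  · rintro (rfl | rfl | ⟨b, ⟨h, h'⟩, rfl⟩)
    · exact ⟨2, by simp [repOfTrace]⟩
    · exact ⟨-2, by simp [repOfTrace, h22]⟩
    · exact ⟨b, by simp [repOfTrace, h, h']⟩

variable [Fintype F] {p : ℕ} [CharP F p]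

theorem coprime_orderOf_repOfTrace (hp : Odd p) (b : F) :
    (orderOf (repOfTrace b)).Coprime p := by
  unfold repOfTrace
  split_ifs with h h'
  · simp
  · exact Nat.Coprime.orderOf_neg hp (by simp)
  · exact SpecialLinearGroup.coprime_orderOf_of_separable_charpoly
      (separable_charpoly_fin_two
        (SpecialLinearGroup.discr_ne_zero_of_trace_ne (by simpa) (by simpa)))

theorem isConj_repOfTrace [Fact p.Prime] (hp : Odd p) {g : SpecialLinearGroup (Fin 2) F}
    (hg : (orderOf g).Coprime p) :
    IsConj g (repOfTrace (g : Matrix (Fin 2) (Fin 2) F).trace) := by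
  unfold repOfTrace
  split_ifs with h h'
  · rw [SpecialLinearGroup.eq_one_of_trace_eq_two h hg]
  · have : -g = 1 := SpecialLinearGroup.eq_one_of_trace_eq_two
      (by rw [SpecialLinearGroup.coe_neg, trace_neg, h', neg_neg]) (hg.orderOf_neg hp)
    rw [neg_eq_iff_eq_neg.mp this]
  · exact (isConj_companionSL_trace (ringChar_ne_two_of_odd hp) g
      (SpecialLinearGroup.discr_ne_zero_of_trace_ne h h')).symm

theorem setOf_coprime_orderOf_eq_range_mk_repOfTrace [Fact p.Prime] (hp : Odd p) :
    {c : ConjClasses (SpecialLinearGroup (Fin 2) F) |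
        ∃ g, c = ConjClasses.mk g ∧ (orderOf g).Coprime p} =
      Set.range fun b : F ↦ ConjClasses.mk (repOfTrace b) := by
  ext c
  constructor
  · rintro ⟨g, rfl, hg⟩
    exact ⟨_, (ConjClasses.mk_eq_mk_iff_isConj.mpr (isConj_repOfTrace hp hg)).symm⟩
  · rintro ⟨b, rfl⟩
    exact ⟨_, rfl, coprime_orderOf_repOfTrace hp b⟩

end repOfTrace

theorem stmt11_general (p e : ℕ) (hp : p.Prime) (hodd : Odd p)
    (F : Type*) [Field F] [Fintype F] (hcard : Fintype.card F = p ^ e) :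
    {c : ConjClasses (Matrix.SpecialLinearGroup (Fin 2) F) |
        ∃ g, c = ConjClasses.mk g ∧ Nat.Coprime (orderOf g) p} =
      insert (ConjClasses.mk 1)
        (insert (ConjClasses.mk (-1))
          ((fun b => ConjClasses.mk (companionSL F b)) ''
            {b : F | b ≠ 2 ∧ b ≠ -2})) ∧
    {c : ConjClasses (Matrix.SpecialLinearGroup (Fin 2) F) |
        ∃ g, c = ConjClasses.mk g ∧ Nat.Coprime (orderOf g) p}.ncard = p ^ e := by
  have : Fact p.Prime := ⟨hp⟩
  have : CharP F p := charP_of_card_eq_prime_pow hcard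
  rw [setOf_coprime_orderOf_eq_range_mk_repOfTrace hodd]
  refine ⟨range_mk_repOfTrace (ringChar_ne_two_of_odd hodd), ?_⟩
  rw [Set.ncard_range_of_injective injective_mk_repOfTrace, Nat.card_eq_fintype_card, hcard]

theorem stmt11 (p e : ℕ) (hp : p.Prime) (hodd : Odd p) (he : 0 < e)
    (F : Type*) [Field F] [Fintype F] (hcard : Fintype.card F = p ^ e) :
    {c : ConjClasses (Matrix.SpecialLinearGroup (Fin 2) F) |
        ∃ g, c = ConjClasses.mk g ∧ Nat.Coprime (orderOf g) p} =
      insert (ConjClasses.mk 1)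
        (insert (ConjClasses.mk (-1))
          ((fun b => ConjClasses.mk (companionSL F b)) ''
            {b : F | b ≠ 2 ∧ b ≠ -2})) ∧
    {c : ConjClasses (Matrix.SpecialLinearGroup (Fin 2) F) |
        ∃ g, c = ConjClasses.mk g ∧ Nat.Coprime (orderOf g) p}.ncard = p ^ e :=
  stmt11_general p e hp hodd F hcard
end

section
/- Let p be prime, F ⊇ 𝔽_p a field, and k a nonnegative integer with base-p expansion k = k_0 + k_1 p + … + k_r p^r. Then the F-span of the monomials X^iY^{k−i} with binomial coefficient C(k,i) not divisible by p is a GL₂(F)-subrepresentation L_k of F[X,Y]_k, and its dimension over F equals ∏_{b=0}^{r} (k_b + 1). -/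
/-!
Substituting `X ↦ aX + cY`, `Y ↦ bX + dY` into `X^i Y^(k-i)` and expanding both powers gives a
combination of the monomials `X^(s+t) Y^(k-s-t)` with coefficients divisible by
`C(i,s) C(k-i,t)`. In characteristic `p` the terms with `p ∣ C(i,s) C(k-i,t)` vanish, and the
others have `p ∤ C(k,s+t)` whenever `p ∤ C(k,i)`, because
`C(k,i) C(i,s) C(k-i,t) = C(k,s+t) C(s+t,s) C(k-s-t,i-s)`.
The dimension is the number of `i` with `p ∤ C(k,i)`, which by Lucas' theorem is
`∏ (k_b + 1)`.
-/

open Finset MvPolynomial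

namespace Nat

variable {p : ℕ}

theorem le_of_not_dvd_choose {a b : ℕ} (h : ¬ p ∣ a.choose b) : b ≤ a := by
  by_contra! hab
  exact h (by simp [choose_eq_zero_of_lt hab])

theorem Prime.not_dvd_choose_of_lt (hp : p.Prime) {r j : ℕ} (hr : r < p) (hj : j ≤ r) :
    ¬ p ∣ r.choose j := fun h =>
  have hfact : r.choose j ∣ r ! :=
    ⟨j ! * (r - j)!, by rw [← mul_assoc, choose_mul_factorial_mul_factorial hj]⟩
  absurd (hp.dvd_factorial.mp (h.trans hfact)) (not_le.mpr hr)

theorem Prime.not_dvd_choose_iff (hp : p.Prime) {k i : ℕ} :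
    ¬ p ∣ k.choose i ↔ i % p ≤ k % p ∧ ¬ p ∣ (k / p).choose (i / p) := by
  have := Fact.mk hp
  rw [(Choose.choose_modEq_choose_mod_mul_choose_div_nat (p := p)).dvd_iff dvd_rfl,
    hp.dvd_mul, not_or]
  exact and_congr_left' ⟨le_of_not_dvd_choose, hp.not_dvd_choose_of_lt (mod_lt _ hp.pos)⟩

theorem choose_mul_choose_comm (n a t : ℕ) :
    n.choose a * (n - a).choose t = n.choose t * (n - t).choose a := by
  have ha := choose_mul (n := n) (le_add_right a t)
  have ht := choose_mul (n := n) (le_add_left t a)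
  rw [add_tsub_cancel_left] at ha
  rw [add_tsub_cancel_right] at ht
  rw [← ha, ← ht, choose_symm_add]

theorem choose_mul_choose_mul_choose {k i s : ℕ} (t : ℕ) (hs : s ≤ i) :
    k.choose i * i.choose s * (k - i).choose t
      = k.choose (s + t) * (s + t).choose s * (k - (s + t)).choose (i - s) := by
  rw [choose_mul hs, choose_mul (le_add_right s t), add_tsub_cancel_left, mul_assoc,
    mul_assoc, show k - i = k - s - (i - s) by omega, choose_mul_choose_comm,
    show k - (s + t) = k - s - t by omega]

theorem Prime.not_dvd_choose_add (hp : p.Prime) {k i s t : ℕ} (hi : ¬ p ∣ k.choose i)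
    (hst : ¬ p ∣ i.choose s * (k - i).choose t) : ¬ p ∣ k.choose (s + t) := by
  have hs : s ≤ i := le_of_not_dvd_choose fun h => hst (h.mul_right _)
  have hprod : ¬ p ∣ k.choose i * (i.choose s * (k - i).choose t) :=
    hp.dvd_mul.not.mpr (not_or.mpr ⟨hi, hst⟩)
  rw [← mul_assoc, choose_mul_choose_mul_choose t hs, mul_assoc] at hprod
  exact fun h => hprod (h.mul_right _)

theorem mem_filter_not_dvd_choose {k i : ℕ} :
    i ∈ {i ∈ range (k + 1) | ¬ p ∣ k.choose i} ↔ ¬ p ∣ k.choose i := by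
  simpa using fun h => lt_succ_of_le (le_of_not_dvd_choose h)

/-- By Lucas' theorem, `i ↦ (i % p, i / p)` is a bijection onto `[0, k % p]` times the set of
admissible indices for `k / p`. -/
theorem Prime.card_filter_not_dvd_choose (hp : p.Prime) (k : ℕ) :
    #{i ∈ range (k + 1) | ¬ p ∣ k.choose i} = ((digits p k).map (· + 1)).prod := by
  induction k using Nat.strong_induction_on with
  | _ k ih =>
  rcases Nat.eq_zero_or_pos k with rfl | hk
  · simp [filter_singleton, hp.ne_one]
  have hsplit : ∀ {a b}, a < p → (a + p * b) % p = a ∧ (a + p * b) / p = b := fun ha =>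
    ⟨by rw [add_mul_mod_self_left, mod_eq_of_lt ha],
     by rw [add_mul_div_left _ _ hp.pos, div_eq_of_lt ha, zero_add]⟩
  rw [digits_def' hp.one_lt hk, List.map_cons, List.prod_cons,
    ← ih _ (div_lt_self hk hp.one_lt), ← card_range (k % p + 1), ← card_product]
  refine card_nbij' (fun i => (i % p, i / p)) (fun x => x.1 + p * x.2) ?_ ?_ ?_ ?_
  · intro i hi
    rw [mem_coe, mem_filter_not_dvd_choose, hp.not_dvd_choose_iff] at hi
    rw [mem_coe, mem_product, mem_range, mem_filter_not_dvd_choose]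
    exact ⟨lt_succ_of_le hi.1, hi.2⟩
  · rintro ⟨a, b⟩ hab
    rw [mem_coe, mem_product, mem_range, mem_filter_not_dvd_choose] at hab
    obtain ⟨hmod, hdiv⟩ := hsplit (b := b) ((le_of_lt_succ hab.1).trans_lt (mod_lt k hp.pos))
    rw [mem_coe, mem_filter_not_dvd_choose, hp.not_dvd_choose_iff, hmod, hdiv]
    exact ⟨le_of_lt_succ hab.1, hab.2⟩
  · intro i _; exact mod_add_div i p
  · rintro ⟨a, b⟩ hab
    rw [mem_coe, mem_product, mem_range] at hab
    obtain ⟨hmod, hdiv⟩ := hsplit (b := b) ((le_of_lt_succ hab.1).trans_lt (mod_lt k hp.pos))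
    simp only [hmod, hdiv]

end Nat

noncomputable section

variable (R : Type*) [CommRing R]

/-- The paper's `L_k`. -/
def lucasSpan (p k : ℕ) : Submodule R (MvPolynomial (Fin 2) R) :=
  Submodule.span R {f | ∃ i ≤ k, ¬ p ∣ k.choose i ∧ f = X 0 ^ i * X 1 ^ (k - i)}

variable {R}

theorem finrank_span_X_pow_mul_X_pow [Nontrivial R] (k : ℕ) (A : Finset ℕ) :
    Module.finrank R (Submodule.span R
      ((fun i => (X 0 ^ i * X 1 ^ (k - i) : MvPolynomial (Fin 2) R)) '' A)) = #A := by
  set e : ℕ → Fin 2 →₀ ℕ := fun i => Finsupp.single 0 i + Finsupp.single 1 (k - i)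
  have he : ∀ i, (X 0 ^ i * X 1 ^ (k - i) : MvPolynomial (Fin 2) R) = monomial (e i) 1 := by
    intro i
    rw [X_pow_eq_monomial, X_pow_eq_monomial, monomial_mul, one_mul]
  have hinj : Set.InjOn (fun i => (X 0 ^ i * X 1 ^ (k - i) : MvPolynomial (Fin 2) R)) A := by
    intro i _ j _ hij
    have : e i = e j := by simpa [he] using hij
    simpa [e] using DFunLike.congr_fun this 0
  have hli : LinearIndepOn R id
      ((fun i => (X 0 ^ i * X 1 ^ (k - i) : MvPolynomial (Fin 2) R)) '' A) := by
    refine (basisMonomials (Fin 2) R).linearIndependent.linearIndepOn_id.mono ?_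
    rintro _ ⟨i, -, rfl⟩
    exact ⟨e i, by simp [he]⟩
  classical
  rw [← coe_image] at hli ⊢
  rw [finrank_span_finset_eq_card hli, card_image_of_injOn hinj]

theorem lucasSpan_eq_span_image (p k : ℕ) :
    lucasSpan R p k = Submodule.span R ((fun i => X 0 ^ i * X 1 ^ (k - i)) ''
      ↑{i ∈ range (k + 1) | ¬ p ∣ k.choose i}) := by
  refine congrArg _ (Set.ext fun f => ⟨?_, ?_⟩)
  · rintro ⟨i, -, hi, rfl⟩
    exact ⟨i, Nat.mem_filter_not_dvd_choose.mpr hi, rfl⟩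
  · rintro ⟨i, hi, rfl⟩
    have hi : ¬ p ∣ k.choose i := Nat.mem_filter_not_dvd_choose.mp hi
    exact ⟨i, Nat.le_of_not_dvd_choose hi, hi, rfl⟩

theorem Nat.Prime.finrank_lucasSpan [Nontrivial R] {p : ℕ} (hp : p.Prime) (k : ℕ) :
    Module.finrank R (lucasSpan R p k) = ((Nat.digits p k).map (· + 1)).prod := by
  rw [lucasSpan_eq_span_image, finrank_span_X_pow_mul_X_pow, hp.card_filter_not_dvd_choose]

section

theorem smul_X_add_smul_X_pow (a b : R) (n : ℕ) :
    (a • X 0 + b • X 1 : MvPolynomial (Fin 2) R) ^ n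
      = ∑ s ∈ range (n + 1),
          (a ^ s * b ^ (n - s) * n.choose s) • (X 0 ^ s * X 1 ^ (n - s)) := by
  rw [add_pow]
  refine sum_congr rfl fun s _ => ?_
  simp only [smul_eq_C_mul, map_mul, map_pow, map_natCast]
  ring

variable {p : ℕ} [CharP R p] {k : ℕ}

theorem mul_natCast_smul_mem_lucasSpan {n j : ℕ} (hj : ¬ p ∣ n → ¬ p ∣ k.choose j)
    (r : R) :
    (r * n) • (X 0 ^ j * X 1 ^ (k - j) : MvPolynomial (Fin 2) R) ∈ lucasSpan R p k := by
  by_cases hn : p ∣ n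
  · simp [(CharP.cast_eq_zero_iff R p n).mpr hn]
  · exact Submodule.smul_mem _ _
      (Submodule.subset_span ⟨j, Nat.le_of_not_dvd_choose (hj hn), hj hn, rfl⟩)

theorem smul_X_add_smul_X_pow_mul_pow_mem_lucasSpan (hp : p.Prime) {i : ℕ}
    (hi : ¬ p ∣ k.choose i) (a b c d : R) :
    (a • X 0 + b • X 1) ^ i * (c • X 0 + d • X 1) ^ (k - i) ∈ lucasSpan R p k := by
  rw [smul_X_add_smul_X_pow, smul_X_add_smul_X_pow, sum_mul_sum]
  refine Submodule.sum_mem _ fun s hs => Submodule.sum_mem _ fun t ht => ?_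
  have hmono : (X 0 ^ s * X 1 ^ (i - s)) * (X 0 ^ t * X 1 ^ (k - i - t))
      = (X 0 ^ (s + t) * X 1 ^ (k - (s + t)) : MvPolynomial (Fin 2) R) := by
    rw [mul_mul_mul_comm, ← pow_add, ← pow_add]
    congr 2
    have := Nat.le_of_not_dvd_choose hi
    simp only [mem_range] at hs ht
    omega
  rw [smul_mul_smul_comm, hmono]
  convert mul_natCast_smul_mem_lucasSpan (hp.not_dvd_choose_add hi)
    (a ^ s * b ^ (i - s) * (c ^ t * d ^ (k - i - t))) using 2
  push_cast
  ring

theorem aeval_mem_lucasSpan (hp : p.Prime) (g : Matrix (Fin 2) (Fin 2) R)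
    {f : MvPolynomial (Fin 2) R} (hf : f ∈ lucasSpan R p k) :
    aeval (fun v => ∑ w, g w v • X w) f ∈ lucasSpan R p k := by
  induction hf using Submodule.span_induction with
  | mem f hf =>
    obtain ⟨i, -, hi, rfl⟩ := hf
    simpa [Fin.sum_univ_two] using
      smul_X_add_smul_X_pow_mul_pow_mem_lucasSpan hp hi (g 0 0) (g 1 0) (g 0 1) (g 1 1)
  | zero => simp
  | add f f' _ _ hf hf' => simpa using add_mem hf hf'
  | smul a f _ hf => simpa using Submodule.smul_mem _ a hf

end

end

theorem stmt13 (p : ℕ) (hp : p.Prime) (F : Type*) [Field F] [CharP F p]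
    (k : ℕ)
    (L : Submodule F (MvPolynomial (Fin 2) F))
    (hL : L = Submodule.span F
      {f | ∃ i ≤ k, ¬ (p ∣ Nat.choose k i) ∧
        f = MvPolynomial.X 0 ^ i * MvPolynomial.X 1 ^ (k - i)}) :
    (∀ g : Matrix (Fin 2) (Fin 2) F, IsUnit g.det → ∀ f ∈ L,
        MvPolynomial.aeval (fun v => ∑ w, g w v • MvPolynomial.X w) f ∈ L) ∧
      Module.finrank F L = ((Nat.digits p k).map (· + 1)).prod := by
  subst hL
  exact ⟨fun g _ f hf => aeval_mem_lucasSpan hp g hf, hp.finrank_lucasSpan k⟩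
end
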